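/- arXiv:2307.01399 — 3 statements merged into one kernel-verified Lean document; each statement's English description precedes it below -/
import Mathlib

section
/- Let f be a probability density on ℝ and f_{μ,σ}(y) = (1/σ) f((y−μ)/σ) its location-scale family. Assume D(f_{0,1} ‖ f_{η,σ}) < ∞ for all η ∈ ℝ, σ ∈ (0,∞), that it is continuous in (η,σ), and that D(f_{0,1} ‖ f_{η,σ}) = O(η² + (1−σ)²) as (η,σ) → (0,1). Then for any J > 0 and any σ̄ > 1 with σ̲ = σ̄^{−1}, there exists a constant C̄ > 0 (depending on f, J, σ̄) such that D(f_{μ₁,σ₁} ‖ f_{μ₂,σ₂}) ≤ C̄ [(μ₁ − μ₂)² + (σ₁ − σ₂)²] for all μ₁, μ₂ ∈ [−J, J] and all σ₁, σ₂ ∈ [σ̲, σ̄]. -/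
open MeasureTheory Filter Asymptotics Topology

/-- The location-scale family `f_{η,σ}(y) = (1/σ) f((y-η)/σ)`. -/
noncomputable def locScale (f : ℝ → ℝ) (η σ : ℝ) : ℝ → ℝ := fun y => σ⁻¹ * f ((y - η) / σ)

/-- Kullback–Leibler divergence `D(q₁‖q₂) = ∫ q₁ log(q₁/q₂) dy` (Lebesgue measure). -/
noncomputable def klDiv (q₁ q₂ : ℝ → ℝ) : ℝ := ∫ y, q₁ y * Real.log (q₁ y / q₂ y)

/-!
The substitution `x = (y - μ₁)/σ₁` shows that the divergence between `f_{μ₁,σ₁}` and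
`f_{μ₂,σ₂}` equals `D(f ‖ f_{η,σ})` with `η = (μ₂ - μ₁)/σ₁`, `σ = σ₂/σ₁`, and
`η² + (1 - σ)² = ((μ₁ - μ₂)² + (σ₁ - σ₂)²)/σ₁²`. For the parameter ranges of the theorem,
`(η, σ)` stays in a compact box inside `{σ > 0}`, on which a continuous function that is
`O(η² + (1 - σ)²)` at the only zero `(0, 1)` of that quadratic is bounded by a multiple of it:
near `(0, 1)` by the `O`-bound, and on the compact rest because the quotient is continuous.
-/

theorem locScale_locScale (f : ℝ → ℝ) (μ η σ τ : ℝ) (hσ : σ ≠ 0) :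
    locScale (locScale f η τ) μ σ = locScale f (μ + σ * η) (σ * τ) := by
  ext y
  simp only [locScale, mul_inv]
  rw [show ((y - μ) / σ - η) / τ = (y - (μ + σ * η)) / (σ * τ) by field_simp; ring]
  ring

theorem klDiv_locScale_locScale (q₁ q₂ : ℝ → ℝ) (μ σ : ℝ) (hσ : 0 < σ) :
    klDiv (locScale q₁ μ σ) (locScale q₂ μ σ) = klDiv q₁ q₂ := by
  set F : ℝ → ℝ := fun x => q₁ x * Real.log (q₁ x / q₂ x)
  have hpointwise : ∀ y, locScale q₁ μ σ y * Real.log (locScale q₁ μ σ y / locScale q₂ μ σ y)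
      = σ⁻¹ * F ((y - μ) / σ) := by
    intro y
    simp only [locScale, F, mul_div_mul_left _ _ (inv_ne_zero hσ.ne'), mul_assoc]
  have hsubst : ∫ y, F ((y - μ) / σ) = σ * ∫ x, F x := by
    rw [integral_sub_right_eq_self (fun z => F (z / σ)) μ, Measure.integral_comp_div,
      abs_of_pos hσ, smul_eq_mul]
  simp only [klDiv, hpointwise, integral_const_mul, hsubst, inv_mul_cancel_left₀ hσ.ne', F]

theorem klDiv_locScale_eq_klDiv_locScale_div (f : ℝ → ℝ) {μ₁ μ₂ σ₁ σ₂ : ℝ} (hσ₁ : 0 < σ₁) :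
    klDiv (locScale f μ₁ σ₁) (locScale f μ₂ σ₂)
      = klDiv f (locScale f ((μ₂ - μ₁) / σ₁) (σ₂ / σ₁)) := by
  have hrel : locScale f μ₂ σ₂ = locScale (locScale f ((μ₂ - μ₁) / σ₁) (σ₂ / σ₁)) μ₁ σ₁ := by
    rw [locScale_locScale _ _ _ _ _ hσ₁.ne', mul_div_cancel₀ _ hσ₁.ne',
      mul_div_cancel₀ _ hσ₁.ne', add_sub_cancel]
  rw [hrel, klDiv_locScale_locScale _ _ _ _ hσ₁]

theorem sq_sub_div_add_sq_one_sub_div (μ₁ μ₂ σ₁ σ₂ : ℝ) (hσ₁ : σ₁ ≠ 0) :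
    ((μ₂ - μ₁) / σ₁) ^ 2 + (1 - σ₂ / σ₁) ^ 2 = ((μ₁ - μ₂) ^ 2 + (σ₁ - σ₂) ^ 2) / σ₁ ^ 2 := by
  field_simp
  ring

theorem Asymptotics.IsBigO.exists_le_mul_on_isCompact {X : Type*} [TopologicalSpace X]
    {g h : X → ℝ} {x₀ : X} {K : Set X} (hK : IsCompact K) (hg : ContinuousOn g K)
    (hh : ContinuousOn h K) (hh_nonneg : ∀ x ∈ K, 0 ≤ h x)
    (hh_pos : ∀ x ∈ K, x ≠ x₀ → 0 < h x) (hO : g =O[𝓝 x₀] h) :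
    ∃ C, 0 < C ∧ ∀ x ∈ K, g x ≤ C * h x := by
  obtain ⟨c, hc, hnear⟩ := isBigO_iff'.mp hO
  obtain ⟨U, hU_sub, hU_open, hx₀U⟩ := eventually_nhds_iff.mp hnear
  have hquot : ContinuousOn (fun x => g x / h x) (K \ U) :=
    (hg.mono Set.sdiff_subset).div (hh.mono Set.sdiff_subset)
      fun x hx => (hh_pos x hx.1 (ne_of_mem_of_not_mem hx₀U hx.2).symm).ne'
  obtain ⟨M, hM⟩ := (hK.diff hU_open).bddAbove_image hquot
  refine ⟨max c M, lt_max_of_lt_left hc, fun x hxK => ?_⟩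
  by_cases hxU : x ∈ U
  · calc g x ≤ ‖g x‖ := le_abs_self _
      _ ≤ c * ‖h x‖ := hU_sub x hxU
      _ = c * h x := by rw [Real.norm_of_nonneg (hh_nonneg x hxK)]
      _ ≤ max c M * h x := by gcongr; exacts [hh_nonneg x hxK, le_max_left _ _]
  · have hpos := hh_pos x hxK (ne_of_mem_of_not_mem hx₀U hxU).symm
    calc g x = g x / h x * h x := (div_mul_cancel₀ _ hpos.ne').symm
      _ ≤ M * h x := by gcongr; exact hM ⟨x, ⟨hxK, hxU⟩, rfl⟩
      _ ≤ max c M * h x := by gcongr; exact le_max_right _ _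

theorem sq_add_one_sub_sq_pos {θ : ℝ × ℝ} (hθ : θ ≠ (0, 1)) : 0 < θ.1 ^ 2 + (1 - θ.2) ^ 2 := by
  by_contra! hle
  have h₁ : θ.1 = 0 := by nlinarith [sq_nonneg θ.1, sq_nonneg (1 - θ.2)]
  have h₂ : θ.2 = 1 := by nlinarith [sq_nonneg θ.1, sq_nonneg (1 - θ.2)]
  exact hθ (Prod.ext h₁ h₂)

theorem sub_div_div_mem_Icc_prod_Icc {J s μ₁ μ₂ σ₁ σ₂ : ℝ} (hs : 0 < s)
    (hμ₁ : μ₁ ∈ Set.Icc (-J) J) (hμ₂ : μ₂ ∈ Set.Icc (-J) J)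
    (hσ₁ : σ₁ ∈ Set.Icc s⁻¹ s) (hσ₂ : σ₂ ∈ Set.Icc s⁻¹ s) :
    ((μ₂ - μ₁) / σ₁, σ₂ / σ₁) ∈
      Set.Icc (-(2 * J * s)) (2 * J * s) ×ˢ Set.Icc (s⁻¹ / s) (s / s⁻¹) := by
  have hσ₁_pos : 0 < σ₁ := (inv_pos.mpr hs).trans_le hσ₁.1
  have hσ₁_inv : σ₁⁻¹ ≤ s := inv_le_of_inv_le₀ hs hσ₁.1
  have hdiff : |μ₂ - μ₁| ≤ 2 * J := abs_sub_le_iff.mpr ⟨by linarith [hμ₁.1, hμ₂.2],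
    by linarith [hμ₁.2, hμ₂.1]⟩
  refine ⟨abs_le.mp ?_, ?_, ?_⟩
  · rw [abs_div, abs_of_pos hσ₁_pos, div_eq_mul_inv]
    exact mul_le_mul hdiff hσ₁_inv (inv_pos.mpr hσ₁_pos).le ((abs_nonneg _).trans hdiff)
  · exact div_le_div₀ ((inv_pos.mpr hs).le.trans hσ₂.1) hσ₂.1 hσ₁_pos hσ₁.2
  · exact div_le_div₀ hs.le hσ₂.2 (inv_pos.mpr hs) hσ₁.1

theorem kl_divergence_upper_bound_general
    (f : ℝ → ℝ)
    (hcont : ContinuousOn (fun θ : ℝ × ℝ => klDiv f (locScale f θ.1 θ.2))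
      {θ : ℝ × ℝ | 0 < θ.2})
    (hO : (fun θ : ℝ × ℝ => klDiv f (locScale f θ.1 θ.2))
      =O[𝓝 ((0 : ℝ), (1 : ℝ))] (fun θ : ℝ × ℝ => θ.1 ^ 2 + (1 - θ.2) ^ 2))
    (J : ℝ) (σbar : ℝ) (hσbar : 1 < σbar) :
    ∃ Cbar : ℝ, 0 < Cbar ∧
      ∀ μ₁ μ₂ σ₁ σ₂ : ℝ, μ₁ ∈ Set.Icc (-J) J → μ₂ ∈ Set.Icc (-J) J →
        σ₁ ∈ Set.Icc σbar⁻¹ σbar → σ₂ ∈ Set.Icc σbar⁻¹ σbar →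
        klDiv (locScale f μ₁ σ₁) (locScale f μ₂ σ₂) ≤
          Cbar * ((μ₁ - μ₂) ^ 2 + (σ₁ - σ₂) ^ 2) := by
  have hσbar_pos : 0 < σbar := one_pos.trans hσbar
  set K := Set.Icc (-(2 * J * σbar)) (2 * J * σbar) ×ˢ Set.Icc (σbar⁻¹ / σbar) (σbar / σbar⁻¹)
  have hK_pos : K ⊆ {θ : ℝ × ℝ | 0 < θ.2} := fun θ hθ =>
    (div_pos (inv_pos.mpr hσbar_pos) hσbar_pos).trans_le hθ.2.1
  obtain ⟨C, hC, hbound⟩ := hO.exists_le_mul_on_isCompact (isCompact_Icc.prod isCompact_Icc)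
    (hcont.mono hK_pos) (by fun_prop) (fun θ _ => by positivity)
    (fun θ _ hθ => sq_add_one_sub_sq_pos hθ)
  refine ⟨C * σbar ^ 2, by positivity, fun μ₁ μ₂ σ₁ σ₂ hμ₁ hμ₂ hσ₁ hσ₂ => ?_⟩
  have hσ₁_pos : 0 < σ₁ := (inv_pos.mpr hσbar_pos).trans_le hσ₁.1
  have hσ₁_inv_sq : (σ₁ ^ 2)⁻¹ ≤ σbar ^ 2 := by
    rw [← inv_pow]; gcongr; exact inv_le_of_inv_le₀ hσbar_pos hσ₁.1
  calc klDiv (locScale f μ₁ σ₁) (locScale f μ₂ σ₂)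
      = klDiv f (locScale f ((μ₂ - μ₁) / σ₁) (σ₂ / σ₁)) :=
        klDiv_locScale_eq_klDiv_locScale_div f hσ₁_pos
    _ ≤ C * (((μ₂ - μ₁) / σ₁) ^ 2 + (1 - σ₂ / σ₁) ^ 2) :=
        hbound _ (sub_div_div_mem_Icc_prod_Icc hσbar_pos hμ₁ hμ₂ hσ₁ hσ₂)
    _ = C * ((σ₁ ^ 2)⁻¹ * ((μ₁ - μ₂) ^ 2 + (σ₁ - σ₂) ^ 2)) := by
        rw [sq_sub_div_add_sq_one_sub_div _ _ _ _ hσ₁_pos.ne', div_eq_inv_mul]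
    _ ≤ C * σbar ^ 2 * ((μ₁ - μ₂) ^ 2 + (σ₁ - σ₂) ^ 2) := by
        rw [mul_assoc]; gcongr

/-- if `D(f_{0,1}‖f_{η,σ})` is finite for all `η ∈ ℝ, σ > 0`, continuous in
`(η,σ)`, and `O(η² + (1-σ)²)` near `(0,1)`, then on compact location and scale ranges the
KL divergence between two members of the location-scale family is bounded above by a
constant multiple of `(μ₁-μ₂)² + (σ₁-σ₂)²`. -/
theorem kl_divergence_upper_bound
    (f : ℝ → ℝ) (hf_nonneg : ∀ y, 0 ≤ f y) (hf_int : ∫ y, f y = 1)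
    (hfin : ∀ η σ : ℝ, 0 < σ →
      Integrable (fun y => f y * Real.log (f y / locScale f η σ y)))
    (hcont : ContinuousOn (fun θ : ℝ × ℝ => klDiv f (locScale f θ.1 θ.2))
      {θ : ℝ × ℝ | 0 < θ.2})
    (hO : (fun θ : ℝ × ℝ => klDiv f (locScale f θ.1 θ.2))
      =O[𝓝 ((0 : ℝ), (1 : ℝ))] (fun θ : ℝ × ℝ => θ.1 ^ 2 + (1 - θ.2) ^ 2))
    (J : ℝ) (hJ : 0 < J) (σbar : ℝ) (hσbar : 1 < σbar) :
    ∃ Cbar : ℝ, 0 < Cbar ∧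
      ∀ μ₁ μ₂ σ₁ σ₂ : ℝ, μ₁ ∈ Set.Icc (-J) J → μ₂ ∈ Set.Icc (-J) J →
        σ₁ ∈ Set.Icc σbar⁻¹ σbar → σ₂ ∈ Set.Icc σbar⁻¹ σbar →
        klDiv (locScale f μ₁ σ₁) (locScale f μ₂ σ₂) ≤
          Cbar * ((μ₁ - μ₂) ^ 2 + (σ₁ - σ₂) ^ 2) :=
  kl_divergence_upper_bound_general f hcont hO J σbar hσbar
end

section
/- Let f_{η,σ}(y) = (τ(1−τ)/σ) exp[−ρ_τ((y−η)/σ)] be the asymmetric Laplace density with location η ∈ ℝ, scale σ > 0, and fixed skewness 0 < τ < 1. Then the Kullback–Leibler divergence D(f_{0,1} ‖ f_{η,σ}) is finite and twice continuously differentiable in (η,σ) in a neighborhood of (0,1); in particular D(f_{0,1} ‖ f_{η,σ}) = O(η² + (σ−1)²) as (η,σ) → (0,1). -/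
/-!
Since `log (f_{0,1}/f_{η,σ})(y) = log σ + ρ_τ(y - η)/σ - ρ_τ(y)` and `E ρ_τ(Y) = 1` for
`Y ∼ f_{0,1}`, the divergence is `log σ + 1/σ - 1 + R(η)/σ` with `R(η) = E ρ_τ(Y - η) - E ρ_τ(Y)`.
On each half-line the density is exponential and the check loss affine, which gives `R` in closed
form: `R(η) = (1-τ)/τ (e^{-τη} - 1 + τη)` for `η ≥ 0`, and the reflected formula for `η < 0`.
The two branches agree at `0` up to second order (`R'' = f_{0,1}`), so `R` is `C²`. Finally
`log σ + 1/σ - 1` and `R(η)` are nonnegative and bounded by `(σ-1)²/σ` and `η²`.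
-/

open MeasureTheory Filter Asymptotics Topology

/-- The check loss `ρ_τ(y) = y(τ - 1{y<0})`. -/
noncomputable def checkLoss (τ y : ℝ) : ℝ := y * (τ - if y < 0 then 1 else 0)

/-- The asymmetric Laplace density with location `η`, scale `σ` and skewness `τ`:
`f_{η,σ}(y) = (τ(1-τ)/σ) exp[-ρ_τ((y-η)/σ)]`. -/
noncomputable def ald (τ η σ : ℝ) : ℝ → ℝ := fun y =>
  τ * (1 - τ) / σ * Real.exp (-(checkLoss τ ((y - η) / σ)))

open Set Real

section ExpIntegrals

variable {b : ℝ}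

lemma hasDerivAt_affine_mul_exp_primitive (hb : b ≠ 0) (B A x : ℝ) :
    HasDerivAt (fun y => (-B / b * y + -(A / b + B / b ^ 2)) * exp (-b * y))
      ((B * x + A) * exp (-b * x)) x := by
  have hlin : HasDerivAt (fun y => -B / b * y + -(A / b + B / b ^ 2)) (-B / b) x := by
    simpa using ((hasDerivAt_id x).const_mul (-B / b)).add_const (-(A / b + B / b ^ 2))
  have hexp : HasDerivAt (fun y => exp (-b * y)) (exp (-b * x) * -b) x := by
    simpa using ((hasDerivAt_id x).const_mul (-b)).exp
  refine (hlin.mul hexp).congr_deriv ?_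
  field_simp
  ring

lemma tendsto_affine_mul_exp_atTop (hb : 0 < b) (B A : ℝ) :
    Tendsto (fun y => (B * y + A) * exp (-b * y)) atTop (𝓝 0) := by
  have h₁ := tendsto_rpow_mul_exp_neg_mul_atTop_nhds_zero 1 b hb
  have h₀ := tendsto_rpow_mul_exp_neg_mul_atTop_nhds_zero 0 b hb
  simp only [rpow_one, rpow_zero, one_mul] at h₁ h₀
  simpa [add_mul, mul_assoc] using (h₁.const_mul B).add (h₀.const_mul A)

lemma integrableOn_Ioi_affine_mul_exp (hb : 0 < b) (a B A : ℝ) :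
    IntegrableOn (fun y => (B * y + A) * exp (-b * y)) (Ioi a) := by
  have hshift : IntegrableOn (fun y => (1 * y + -a) * exp (-b * y)) (Ioi a) :=
    integrableOn_Ioi_deriv_of_nonneg'
      (fun x _ => hasDerivAt_affine_mul_exp_primitive hb.ne' 1 (-a) x)
      (fun x hx => mul_nonneg (by linarith [mem_Ioi.mp hx]) (exp_pos _).le)
      (tendsto_affine_mul_exp_atTop hb _ _)
  refine IntegrableOn.congr_fun
    ((hshift.const_mul B).add ((exp_neg_integrableOn_Ioi a hb).const_mul (B * a + A)))
    (fun y _ => by simp only [Pi.add_apply]; ring) measurableSet_Ioi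

lemma integral_Ioi_affine_mul_exp (hb : 0 < b) (a B A : ℝ) :
    ∫ y in Ioi a, (B * y + A) * exp (-b * y) = ((B * a + A) / b + B / b ^ 2) * exp (-b * a) := by
  rw [integral_Ioi_of_hasDerivAt_of_tendsto'
    (fun x _ => hasDerivAt_affine_mul_exp_primitive hb.ne' B A x)
    (integrableOn_Ioi_affine_mul_exp hb a B A) (tendsto_affine_mul_exp_atTop hb _ _)]
  ring

lemma integral_Ioc_affine_mul_exp (hb : b ≠ 0) {u v : ℝ} (huv : u ≤ v) (B A : ℝ) :
    ∫ y in Ioc u v, (B * y + A) * exp (-b * y) =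
      ((B * u + A) / b + B / b ^ 2) * exp (-b * u) -
        ((B * v + A) / b + B / b ^ 2) * exp (-b * v) := by
  rw [← intervalIntegral.integral_of_le huv, intervalIntegral.integral_eq_sub_of_hasDerivAt
    (fun x _ => hasDerivAt_affine_mul_exp_primitive hb B A x)
    ((by fun_prop : Continuous fun y => (B * y + A) * exp (-b * y)).intervalIntegrable _ _)]
  ring

end ExpIntegrals

lemma integrable_and_integral_eq_Ioi_add_Ioi_comp_neg {g : ℝ → ℝ} (hpos : IntegrableOn g (Ioi 0))
    (hneg : IntegrableOn (fun y => g (-y)) (Ioi 0)) :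
    Integrable g ∧ ∫ y, g y = (∫ y in Ioi 0, g y) + ∫ y in Ioi 0, g (-y) := by
  have hIic : IntegrableOn g (Iic 0) := by
    rw [integrableOn_Iic_iff_integrableOn_Iio]
    simpa using hneg.comp_neg
  refine ⟨integrableOn_univ.mp (by simpa using hIic.union hpos), ?_⟩
  rw [integral_comp_neg_Ioi, neg_zero, add_comm,
    ← setIntegral_union (Iic_disjoint_Ioi le_rfl) measurableSet_Ioi hIic hpos,
    Iic_union_Ioi, Measure.restrict_univ]

lemma hasDerivAt_ite_nonneg {f g f' g' : ℝ → ℝ} (hf : ∀ x, HasDerivAt f (f' x) x)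
    (hg : ∀ x, HasDerivAt g (g' x) x) (h₀ : f 0 = g 0) (h₀' : f' 0 = g' 0) (x : ℝ) :
    HasDerivAt (fun x => if 0 ≤ x then f x else g x) (if 0 ≤ x then f' x else g' x) x := by
  rcases lt_trichotomy x 0 with hx | rfl | hx
  · rw [if_neg hx.not_ge]
    refine (hg x).congr_of_eventuallyEq ?_
    filter_upwards [Iio_mem_nhds hx] with y hy
    rw [if_neg (not_le.mpr hy)]
  · rw [if_pos le_rfl]
    have hright : HasDerivWithinAt (fun x => if 0 ≤ x then f x else g x) (f' 0) (Ici 0) 0 :=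
      (hf 0).hasDerivWithinAt.congr (fun y hy => if_pos hy) (if_pos le_rfl)
    have hleft : HasDerivWithinAt (fun x => if 0 ≤ x then f x else g x) (f' 0) (Iic 0) 0 := by
      refine h₀' ▸ (hg 0).hasDerivWithinAt.congr (fun y hy => ?_) (by simp [h₀])
      rcases (mem_Iic.mp hy).lt_or_eq with hy | rfl
      · exact if_neg (not_le.mpr hy)
      · simp [h₀]
    simpa using hleft.union hright
  · rw [if_pos hx.le]
    refine (hf x).congr_of_eventuallyEq ?_
    filter_upwards [Ioi_mem_nhds hx] with y hy
    rw [if_pos (le_of_lt hy)]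

lemma contDiff_two_of_hasDerivAt {f f' f'' : ℝ → ℝ} (hf : ∀ x, HasDerivAt f (f' x) x)
    (hf' : ∀ x, HasDerivAt f' (f'' x) x) (hf'' : Continuous f'') : ContDiff ℝ 2 f := by
  have hderiv : deriv f = f' := funext fun x => (hf x).deriv
  have hderiv' : deriv f' = f'' := funext fun x => (hf' x).deriv
  rw [show (2 : WithTop ℕ∞) = 1 + 1 from rfl, contDiff_succ_iff_deriv, hderiv]
  refine ⟨fun x => (hf x).differentiableAt, by simp, ?_⟩
  exact contDiff_one_iff_deriv.mpr ⟨fun x => (hf' x).differentiableAt, hderiv' ▸ hf''⟩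

lemma hasDerivAt_exp_const_mul (a x : ℝ) :
    HasDerivAt (fun y => exp (a * y)) (a * exp (a * x)) x := by
  simpa [mul_comm] using ((hasDerivAt_id x).const_mul a).exp

lemma hasDerivAt_mul_one_sub_exp (c a x : ℝ) :
    HasDerivAt (fun y => c * (1 - exp (a * y))) (-(c * a) * exp (a * x)) x :=
  (((hasDerivAt_exp_const_mul a x).const_sub 1).const_mul c).congr_deriv (by ring)

lemma exp_neg_sub_one_add_le_sq {x : ℝ} (hx : 0 ≤ x) : exp (-x) - 1 + x ≤ x ^ 2 := by
  have hq : 0 < 1 - x + x ^ 2 := by nlinarith [sq_nonneg (x - 1)]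
  -- `(1 + x) (1 - x + x²) = 1 + x³`
  have hmul : 1 ≤ exp x * (1 - x + x ^ 2) := by
    nlinarith [mul_le_mul_of_nonneg_right (add_one_le_exp x) hq.le, pow_nonneg hx 3]
  have hinv : exp (-x) * exp x = 1 := by rw [← exp_add, neg_add_cancel, exp_zero]
  nlinarith [mul_le_mul_of_nonneg_left hmul (exp_pos (-x)).le]

section AsymmetricLaplace

variable {τ : ℝ}

lemma checkLoss_of_nonneg {y : ℝ} (h : 0 ≤ y) : checkLoss τ y = τ * y := by
  simp [checkLoss, not_lt.mpr h, mul_comm]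

lemma checkLoss_of_nonpos {y : ℝ} (h : y ≤ 0) : checkLoss τ y = (τ - 1) * y := by
  rcases h.lt_or_eq with h | rfl
  · simp [checkLoss, h, mul_comm]
  · simp [checkLoss]

lemma checkLoss_neg (τ y : ℝ) : checkLoss τ (-y) = checkLoss (1 - τ) y := by
  rcases le_total 0 y with h | h
  · rw [checkLoss_of_nonpos (neg_nonpos.mpr h), checkLoss_of_nonneg h]; ring
  · rw [checkLoss_of_nonneg (neg_nonneg.mpr h), checkLoss_of_nonpos h]; ring

lemma checkLoss_div {σ : ℝ} (hσ : 0 < σ) (x : ℝ) : checkLoss τ (x / σ) = checkLoss τ x / σ := by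
  simp only [checkLoss, div_lt_iff₀ hσ, zero_mul]
  ring

lemma ald_pos (hτ0 : 0 < τ) (hτ1 : τ < 1) {σ : ℝ} (hσ : 0 < σ) (η y : ℝ) : 0 < ald τ η σ y :=
  mul_pos (div_pos (mul_pos hτ0 (sub_pos.mpr hτ1)) hσ) (exp_pos _)

lemma ald_zero_one_of_nonneg {y : ℝ} (hy : 0 ≤ y) :
    ald τ 0 1 y = τ * (1 - τ) * exp (-τ * y) := by
  simp [ald, checkLoss_of_nonneg hy]

lemma ald_zero_one_neg (τ y : ℝ) : ald τ 0 1 (-y) = ald (1 - τ) 0 1 y := by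
  simp only [ald, sub_zero, div_one, checkLoss_neg]
  ring

lemma log_ald (hτ0 : 0 < τ) (hτ1 : τ < 1) {σ : ℝ} (hσ : 0 < σ) (η y : ℝ) :
    log (ald τ η σ y) = log (τ * (1 - τ)) - log σ - checkLoss τ (y - η) / σ := by
  have hc : 0 < τ * (1 - τ) := mul_pos hτ0 (sub_pos.mpr hτ1)
  rw [ald, log_mul (div_pos hc hσ).ne' (exp_pos _).ne', log_exp, log_div hc.ne' hσ.ne',
    checkLoss_div hσ]
  ring

lemma log_ald_div_ald (hτ0 : 0 < τ) (hτ1 : τ < 1) {σ : ℝ} (hσ : 0 < σ) (η y : ℝ) :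
    log (ald τ 0 1 y / ald τ η σ y) = log σ + checkLoss τ (y - η) / σ - checkLoss τ y := by
  rw [log_div (ald_pos hτ0 hτ1 one_pos 0 y).ne' (ald_pos hτ0 hτ1 hσ η y).ne',
    log_ald hτ0 hτ1 one_pos, log_ald hτ0 hτ1 hσ]
  simp only [log_one, sub_zero, div_one]
  ring

noncomputable def excessRiskRight (τ η : ℝ) : ℝ := (1 - τ) / τ * (exp (-τ * η) - 1 + τ * η)

/-- Closed form of `E ρ_τ(Y - η) - E ρ_τ(Y)` for `Y ∼ f_{0,1}`; the branch `η < 0` is the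
branch `η ≥ 0` under the reflection `y ↦ -y`, `τ ↦ 1 - τ`. -/
noncomputable def excessRisk (τ η : ℝ) : ℝ :=
  if 0 ≤ η then excessRiskRight τ η else excessRiskRight (1 - τ) (-η)

@[simp]
lemma excessRisk_zero (τ : ℝ) : excessRisk τ 0 = 0 := by
  simp [excessRisk, excessRiskRight]

lemma ald_zero_one_neg_mul_checkLoss (τ η y : ℝ) :
    ald τ 0 1 (-y) * checkLoss τ (-y - η) = ald (1 - τ) 0 1 y * checkLoss (1 - τ) (y - -η) := by
  rw [ald_zero_one_neg, show -y - η = -(y - -η) by ring, checkLoss_neg]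

lemma integrableOn_and_integral_Ioi_ald (hτ0 : 0 < τ) :
    IntegrableOn (ald τ 0 1) (Ioi 0) ∧ ∫ y in Ioi 0, ald τ 0 1 y = 1 - τ := by
  have heq : EqOn (fun y => (0 * y + τ * (1 - τ)) * exp (-τ * y)) (ald τ 0 1) (Ioi 0) :=
    fun y hy => by rw [ald_zero_one_of_nonneg (le_of_lt hy)]; ring
  refine ⟨(integrableOn_Ioi_affine_mul_exp hτ0 0 _ _).congr_fun heq measurableSet_Ioi, ?_⟩
  rw [← setIntegral_congr_fun measurableSet_Ioi heq, integral_Ioi_affine_mul_exp hτ0]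
  simp only [mul_zero, zero_add, exp_zero, mul_one]
  field_simp
  ring

lemma integrableOn_and_integral_Ioi_ald_mul_checkLoss_of_nonpos (hτ0 : 0 < τ) {η : ℝ}
    (hη : η ≤ 0) :
    IntegrableOn (fun y => ald τ 0 1 y * checkLoss τ (y - η)) (Ioi 0) ∧
      ∫ y in Ioi 0, ald τ 0 1 y * checkLoss τ (y - η) = (1 - τ) - τ * (1 - τ) * η := by
  have heq : EqOn (fun y => (τ * (1 - τ) * τ * y + -(τ * (1 - τ) * τ * η)) * exp (-τ * y))
      (fun y => ald τ 0 1 y * checkLoss τ (y - η)) (Ioi 0) := fun y hy => by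
    dsimp only
    rw [ald_zero_one_of_nonneg (le_of_lt hy), checkLoss_of_nonneg (by linarith [mem_Ioi.mp hy])]
    ring
  refine ⟨(integrableOn_Ioi_affine_mul_exp hτ0 0 _ _).congr_fun heq measurableSet_Ioi, ?_⟩
  rw [← setIntegral_congr_fun measurableSet_Ioi heq, integral_Ioi_affine_mul_exp hτ0]
  simp only [mul_zero, zero_add, exp_zero, mul_one]
  field_simp
  ring

lemma integrableOn_and_integral_Ioi_ald_mul_checkLoss_of_nonneg (hτ0 : 0 < τ) {η : ℝ}
    (hη : 0 ≤ η) :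
    IntegrableOn (fun y => ald τ 0 1 y * checkLoss τ (y - η)) (Ioi 0) ∧
      ∫ y in Ioi 0, ald τ 0 1 y * checkLoss τ (y - η) =
        (1 - τ) / τ * exp (-τ * η) + (1 - τ) ^ 2 * η - (1 - τ) ^ 2 / τ := by
  set c := τ * (1 - τ)
  have hnear : EqOn (fun y => (c * (τ - 1) * y + -(c * (τ - 1) * η)) * exp (-τ * y))
      (fun y => ald τ 0 1 y * checkLoss τ (y - η)) (Ioc 0 η) := fun y hy => by
    dsimp only
    rw [ald_zero_one_of_nonneg hy.1.le, checkLoss_of_nonpos (by linarith [hy.2])]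
    ring
  have hfar : EqOn (fun y => (c * τ * y + -(c * τ * η)) * exp (-τ * y))
      (fun y => ald τ 0 1 y * checkLoss τ (y - η)) (Ioi η) := fun y hy => by
    dsimp only
    rw [ald_zero_one_of_nonneg (by linarith [mem_Ioi.mp hy]),
      checkLoss_of_nonneg (by linarith [mem_Ioi.mp hy])]
    ring
  have inear : IntegrableOn (fun y => ald τ 0 1 y * checkLoss τ (y - η)) (Ioc 0 η) :=
    ((by fun_prop : Continuous fun y => (c * (τ - 1) * y + -(c * (τ - 1) * η)) *
      exp (-τ * y)).integrableOn_Ioc).congr_fun hnear measurableSet_Ioc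
  have ifar : IntegrableOn (fun y => ald τ 0 1 y * checkLoss τ (y - η)) (Ioi η) :=
    (integrableOn_Ioi_affine_mul_exp hτ0 η _ _).congr_fun hfar measurableSet_Ioi
  refine ⟨Ioc_union_Ioi_eq_Ioi hη ▸ inear.union ifar, ?_⟩
  rw [← Ioc_union_Ioi_eq_Ioi hη,
    setIntegral_union Ioc_disjoint_Ioi_same measurableSet_Ioi inear ifar,
    ← setIntegral_congr_fun measurableSet_Ioc hnear, ← setIntegral_congr_fun measurableSet_Ioi hfar,
    integral_Ioc_affine_mul_exp hτ0.ne' hη, integral_Ioi_affine_mul_exp hτ0]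
  simp only [mul_zero, zero_add, exp_zero, mul_one]
  field_simp
  ring

lemma integrable_and_integral_ald (hτ0 : 0 < τ) (hτ1 : τ < 1) :
    Integrable (ald τ 0 1) ∧ ∫ y, ald τ 0 1 y = 1 := by
  have hneg : (fun y => ald τ 0 1 (-y)) = ald (1 - τ) 0 1 := funext (ald_zero_one_neg τ)
  obtain ⟨ipos, vpos⟩ := integrableOn_and_integral_Ioi_ald hτ0
  obtain ⟨ineg, vneg⟩ := integrableOn_and_integral_Ioi_ald (sub_pos.mpr hτ1)
  obtain ⟨hint, hval⟩ := integrable_and_integral_eq_Ioi_add_Ioi_comp_neg ipos (hneg ▸ ineg)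
  refine ⟨hint, ?_⟩
  rw [hval, hneg, vpos, vneg]
  ring

lemma integrable_and_integral_ald_mul_checkLoss (hτ0 : 0 < τ) (hτ1 : τ < 1) (η : ℝ) :
    Integrable (fun y => ald τ 0 1 y * checkLoss τ (y - η)) ∧
      ∫ y, ald τ 0 1 y * checkLoss τ (y - η) = 1 + excessRisk τ η := by
  have hτ1' : 0 < 1 - τ := sub_pos.mpr hτ1
  have hneg : (fun y => ald τ 0 1 (-y) * checkLoss τ (-y - η)) =
      fun y => ald (1 - τ) 0 1 y * checkLoss (1 - τ) (y - -η) :=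
    funext (ald_zero_one_neg_mul_checkLoss τ η)
  rcases le_or_gt 0 η with hη | hη
  · obtain ⟨ipos, vpos⟩ := integrableOn_and_integral_Ioi_ald_mul_checkLoss_of_nonneg hτ0 hη
    obtain ⟨ineg, vneg⟩ :=
      integrableOn_and_integral_Ioi_ald_mul_checkLoss_of_nonpos hτ1' (neg_nonpos.mpr hη)
    obtain ⟨hint, hval⟩ := integrable_and_integral_eq_Ioi_add_Ioi_comp_neg ipos (hneg ▸ ineg)
    refine ⟨hint, ?_⟩
    rw [hval, hneg, vpos, vneg, excessRisk, if_pos hη, excessRiskRight]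
    field_simp
    ring
  · obtain ⟨ipos, vpos⟩ := integrableOn_and_integral_Ioi_ald_mul_checkLoss_of_nonpos hτ0 hη.le
    obtain ⟨ineg, vneg⟩ :=
      integrableOn_and_integral_Ioi_ald_mul_checkLoss_of_nonneg hτ1' (neg_nonneg.mpr hη.le)
    obtain ⟨hint, hval⟩ := integrable_and_integral_eq_Ioi_add_Ioi_comp_neg ipos (hneg ▸ ineg)
    refine ⟨hint, ?_⟩
    rw [hval, hneg, vpos, vneg, excessRisk, if_neg hη.not_ge, excessRiskRight]
    field_simp
    ring

lemma hasDerivAt_excessRiskRight (hτ : τ ≠ 0) (η : ℝ) :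
    HasDerivAt (excessRiskRight τ) ((1 - τ) * (1 - exp (-τ * η))) η := by
  refine ((((hasDerivAt_exp_const_mul (-τ) η).sub_const 1).add
    ((hasDerivAt_id η).const_mul τ)).const_mul ((1 - τ) / τ)).congr_deriv ?_
  field_simp
  ring

lemma hasDerivAt_excessRiskRight_neg (hτ : τ ≠ 1) (η : ℝ) :
    HasDerivAt (fun η => excessRiskRight (1 - τ) (-η)) (-τ * (1 - exp ((1 - τ) * η))) η := by
  have h := (hasDerivAt_excessRiskRight (sub_ne_zero.mpr hτ.symm) (-η)).comp η (hasDerivAt_neg η)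
  refine h.congr_deriv ?_
  ring_nf

lemma contDiff_excessRisk (hτ0 : τ ≠ 0) (hτ1 : τ ≠ 1) : ContDiff ℝ 2 (excessRisk τ) := by
  have h1 := hasDerivAt_ite_nonneg (hasDerivAt_excessRiskRight hτ0)
    (hasDerivAt_excessRiskRight_neg hτ1) (by simp [excessRiskRight]) (by simp)
  have h2 := hasDerivAt_ite_nonneg (hasDerivAt_mul_one_sub_exp (1 - τ) (-τ))
    (hasDerivAt_mul_one_sub_exp (-τ) (1 - τ)) (by simp) (by simp only [mul_zero, exp_zero]; ring)
  refine contDiff_two_of_hasDerivAt h1 h2 ?_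
  exact Continuous.if_le (by fun_prop) (by fun_prop) continuous_const continuous_id
    (fun x hx => by subst hx; simp only [mul_zero, exp_zero]; ring)

lemma excessRiskRight_nonneg (hτ0 : 0 < τ) (hτ1 : τ < 1) (η : ℝ) : 0 ≤ excessRiskRight τ η :=
  mul_nonneg (div_nonneg (sub_pos.mpr hτ1).le hτ0.le) (by linarith [add_one_le_exp (-τ * η)])

lemma excessRiskRight_le_sq (hτ0 : 0 < τ) (hτ1 : τ < 1) {η : ℝ} (hη : 0 ≤ η) :
    excessRiskRight τ η ≤ η ^ 2 := by
  have h := exp_neg_sub_one_add_le_sq (mul_nonneg hτ0.le hη)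
  calc excessRiskRight τ η ≤ (1 - τ) / τ * (τ * η) ^ 2 := by
        rw [excessRiskRight, neg_mul]
        exact mul_le_mul_of_nonneg_left h (div_nonneg (sub_pos.mpr hτ1).le hτ0.le)
    _ = τ * (1 - τ) * η ^ 2 := by field_simp
    _ ≤ η ^ 2 := by nlinarith [sq_nonneg η, sq_nonneg (2 * τ - 1)]

lemma excessRisk_nonneg (hτ0 : 0 < τ) (hτ1 : τ < 1) (η : ℝ) : 0 ≤ excessRisk τ η := by
  unfold excessRisk
  split_ifs
  · exact excessRiskRight_nonneg hτ0 hτ1 η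
  · exact excessRiskRight_nonneg (by linarith) (by linarith) (-η)

lemma excessRisk_le_sq (hτ0 : 0 < τ) (hτ1 : τ < 1) (η : ℝ) : excessRisk τ η ≤ η ^ 2 := by
  unfold excessRisk
  split_ifs with hη
  · exact excessRiskRight_le_sq hτ0 hτ1 hη
  · simpa using
      excessRiskRight_le_sq (τ := 1 - τ) (by linarith) (by linarith) (by linarith : 0 ≤ -η)

lemma ald_mul_log_div_ald (hτ0 : 0 < τ) (hτ1 : τ < 1) {σ : ℝ} (hσ : 0 < σ) (η : ℝ) :
    (fun y => ald τ 0 1 y * log (ald τ 0 1 y / ald τ η σ y)) = fun y =>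
      log σ * ald τ 0 1 y + σ⁻¹ * (ald τ 0 1 y * checkLoss τ (y - η)) -
        ald τ 0 1 y * checkLoss τ (y - 0) := by
  ext y
  rw [log_ald_div_ald hτ0 hτ1 hσ, sub_zero]
  ring

lemma integrable_ald_mul_log_div_ald (hτ0 : 0 < τ) (hτ1 : τ < 1) {σ : ℝ} (hσ : 0 < σ) (η : ℝ) :
    Integrable (fun y => ald τ 0 1 y * log (ald τ 0 1 y / ald τ η σ y)) := by
  rw [ald_mul_log_div_ald hτ0 hτ1 hσ]
  exact (((integrable_and_integral_ald hτ0 hτ1).1.const_mul _).add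
    ((integrable_and_integral_ald_mul_checkLoss hτ0 hτ1 η).1.const_mul _)).sub
    (integrable_and_integral_ald_mul_checkLoss hτ0 hτ1 0).1

lemma klDiv_ald (hτ0 : 0 < τ) (hτ1 : τ < 1) {σ : ℝ} (hσ : 0 < σ) (η : ℝ) :
    klDiv (ald τ 0 1) (ald τ η σ) = log σ + σ⁻¹ - 1 + excessRisk τ η / σ := by
  obtain ⟨i₁, v₁⟩ := integrable_and_integral_ald hτ0 hτ1
  obtain ⟨iη, vη⟩ := integrable_and_integral_ald_mul_checkLoss hτ0 hτ1 η
  obtain ⟨i₀, v₀⟩ := integrable_and_integral_ald_mul_checkLoss hτ0 hτ1 0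
  have hsum : Integrable fun y => log σ * ald τ 0 1 y + σ⁻¹ * (ald τ 0 1 y * checkLoss τ (y - η)) :=
    (i₁.const_mul _).add (iη.const_mul _)
  rw [klDiv, ald_mul_log_div_ald hτ0 hτ1 hσ, integral_sub hsum i₀,
    integral_add (i₁.const_mul _) (iη.const_mul _), integral_const_mul, integral_const_mul,
    v₁, vη, v₀, excessRisk_zero]
  ring

lemma contDiffOn_klDiv_ald (hτ0 : 0 < τ) (hτ1 : τ < 1) :
    ContDiffOn ℝ 2 (fun θ : ℝ × ℝ => klDiv (ald τ 0 1) (ald τ θ.1 θ.2)) {θ | 0 < θ.2} := by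
  have hσ : ∀ θ ∈ {θ : ℝ × ℝ | 0 < θ.2}, θ.2 ≠ 0 := fun θ hθ => ne_of_gt hθ
  refine ContDiffOn.congr ?_ fun θ hθ => klDiv_ald hτ0 hτ1 hθ θ.1
  exact (((contDiffOn_snd.log hσ).add (contDiffOn_snd.inv hσ)).sub contDiffOn_const).add
    (((contDiff_excessRisk hτ0.ne' hτ1.ne).comp contDiff_fst).contDiffOn.div contDiffOn_snd hσ)

lemma klDiv_ald_nonneg (hτ0 : 0 < τ) (hτ1 : τ < 1) {σ : ℝ} (hσ : 0 < σ) (η : ℝ) :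
    0 ≤ klDiv (ald τ 0 1) (ald τ η σ) := by
  rw [klDiv_ald hτ0 hτ1 hσ]
  have := one_sub_inv_le_log_of_pos hσ
  have := div_nonneg (excessRisk_nonneg hτ0 hτ1 η) hσ.le
  linarith

lemma klDiv_ald_le (hτ0 : 0 < τ) (hτ1 : τ < 1) {σ : ℝ} (hσ : 1 / 2 < σ) (η : ℝ) :
    klDiv (ald τ 0 1) (ald τ η σ) ≤ 2 * (η ^ 2 + (σ - 1) ^ 2) := by
  have hσ0 : 0 < σ := by linarith
  rw [klDiv_ald hτ0 hτ1 hσ0]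
  have hlog := log_le_sub_one_of_pos hσ0
  have hscale : σ - 1 + σ⁻¹ - 1 ≤ 2 * (σ - 1) ^ 2 := by
    rw [show σ - 1 + σ⁻¹ - 1 = (σ - 1) ^ 2 / σ by field_simp; ring, div_le_iff₀ hσ0]
    nlinarith [sq_nonneg (σ - 1)]
  have hloc : excessRisk τ η / σ ≤ 2 * η ^ 2 := by
    rw [div_le_iff₀ hσ0]
    nlinarith [excessRisk_le_sq hτ0 hτ1 η, excessRisk_nonneg hτ0 hτ1 η]
  linarith

end AsymmetricLaplace

/-- for the asymmetric Laplace family, `D(f_{0,1}‖f_{η,σ})` is finite and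
twice continuously differentiable in `(η,σ)` on a neighborhood of `(0,1)`; in particular
`D(f_{0,1}‖f_{η,σ}) = O(η² + (σ-1)²)` as `(η,σ) → (0,1)`. -/
theorem ald_kl_twice_differentiable
    (τ : ℝ) (hτ0 : 0 < τ) (hτ1 : τ < 1) :
    (∃ Uset ∈ 𝓝 ((0 : ℝ), (1 : ℝ)),
      (∀ θ ∈ Uset,
        Integrable (fun y => ald τ 0 1 y * Real.log (ald τ 0 1 y / ald τ θ.1 θ.2 y))) ∧
      ContDiffOn ℝ 2 (fun θ : ℝ × ℝ => klDiv (ald τ 0 1) (ald τ θ.1 θ.2)) Uset) ∧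
    (fun θ : ℝ × ℝ => klDiv (ald τ 0 1) (ald τ θ.1 θ.2))
      =O[𝓝 ((0 : ℝ), (1 : ℝ))] (fun θ : ℝ × ℝ => θ.1 ^ 2 + (θ.2 - 1) ^ 2) := by
  have hU : {θ : ℝ × ℝ | 1 / 2 < θ.2} ∈ 𝓝 ((0 : ℝ), (1 : ℝ)) :=
    (isOpen_lt continuous_const continuous_snd).mem_nhds (by norm_num)
  have hpos : ∀ θ ∈ {θ : ℝ × ℝ | 1 / 2 < θ.2}, 0 < θ.2 := fun θ (hθ : 1 / 2 < θ.2) => by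
    linarith
  refine ⟨⟨_, hU, fun θ hθ => integrable_ald_mul_log_div_ald hτ0 hτ1 (hpos θ hθ) θ.1,
    (contDiffOn_klDiv_ald hτ0 hτ1).mono hpos⟩, IsBigO.of_bound 2 ?_⟩
  filter_upwards [hU] with θ hθ
  rw [Real.norm_of_nonneg (klDiv_ald_nonneg hτ0 hτ1 (hpos θ hθ) θ.1),
    Real.norm_of_nonneg (by positivity)]
  exact klDiv_ald_le hτ0 hτ1 hθ θ.1
end

section
/- Let f_{η,σ}(y) = 1/(πσ[1 + ((y−η)/σ)²]) be the Cauchy density with location η ∈ ℝ and scale σ > 0. Then the Kullback–Leibler divergence admits the closed form D(f_{0,1} ‖ f_{η,σ}) = log[ ((1+σ)² + η²) / (4σ) ] for all η ∈ ℝ and σ > 0; consequently D(f_{0,1} ‖ f_{η,σ}) is twice differentiable in (η,σ) at (0,1) and D(f_{0,1} ‖ f_{η,σ}) = O(η² + (σ−1)²) as (η,σ) → (0,1). -/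
/-!
Under the substitution `y = -tan (θ / 2)` the standard Cauchy law becomes the uniform law of
`u = e^{iθ}` on the unit circle. Writing `w = η - σ i`, one has
`(y - w) (u + 1) = (i - w) (u - c)` with `c = (i + w) / (i - w)` the Cayley image of `w`, so the
log-likelihood ratio `log (f_{0,1} / f_{η,σ})` becomes `log (|i - w|² / (4σ)) + 2 log |u - c|`.
Since `w` lies in the lower half-plane, `|c| < 1`, and by Jensen's formula `log |u - c|` has mean
zero over the circle. This leaves `log (((1 + σ)² + η²) / (4σ))`, which is smooth near `(0, 1)`
and, by `log x ≤ x - 1`, bounded by `(η² + (σ - 1)²) / (4σ)`.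
-/

open MeasureTheory Filter Asymptotics Topology

noncomputable def cauchy (η σ : ℝ) : ℝ → ℝ := fun y =>
  1 / (Real.pi * σ * (1 + ((y - η) / σ) ^ 2))

open Set
open scoped Real

lemma range_neg_two_mul_arctan : range (fun y : ℝ => -2 * Real.arctan y) = Ioo (-π) π := by
  ext θ
  constructor
  · rintro ⟨y, rfl⟩
    have := Real.arctan_lt_pi_div_two y
    have := Real.neg_pi_div_two_lt_arctan y
    constructor <;> linarith
  · rintro ⟨h₁, h₂⟩
    refine ⟨-Real.tan (θ / 2), ?_⟩
    change -2 * Real.arctan (-Real.tan (θ / 2)) = θ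
    rw [← Real.tan_neg, Real.arctan_tan] <;> linarith

theorem Real.circleAverage_eq_setIntegral_Ioo {E : Type*} [NormedAddCommGroup E]
    [NormedSpace ℝ E] (f : ℂ → E) (c : ℂ) (R : ℝ) :
    Real.circleAverage f c R = (2 * π)⁻¹ • ∫ θ in Ioo (-π) π, f (circleMap c R θ) := by
  rw [Real.circleAverage_eq_integral_add (-π),
    intervalIntegral.integral_comp_add_right (fun θ => f (circleMap c R θ)),
    intervalIntegral.integral_of_le (by linarith [Real.pi_pos]), integral_Ioc_eq_integral_Ioo,
    zero_add, two_mul, add_neg_cancel_right]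

lemma circleMap_zero_one_eq_sq (θ : ℝ) :
    circleMap 0 1 θ = ((Real.cos (θ / 2) : ℂ) + Real.sin (θ / 2) * Complex.I) ^ 2 := by
  rw [circleMap_zero, Complex.ofReal_one, one_mul, Complex.ofReal_cos, Complex.ofReal_sin,
    ← Complex.exp_mul_I, ← Complex.exp_nat_mul]
  push_cast
  ring_nf

theorem neg_tan_half_sub_mul_circleMap_add_one {θ : ℝ} (hθ : Real.cos (θ / 2) ≠ 0) (w : ℂ) :
    ((-Real.tan (θ / 2) : ℝ) - w) * (circleMap 0 1 θ + 1)
      = (Complex.I - w) * circleMap 0 1 θ - (Complex.I + w) := by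
  have hc : (Real.cos (θ / 2) : ℂ) ≠ 0 := by exact_mod_cast hθ
  have hpyth : (Real.cos (θ / 2) : ℂ) ^ 2 + (Real.sin (θ / 2) : ℂ) ^ 2 = 1 := by
    exact_mod_cast Real.cos_sq_add_sin_sq (θ / 2)
  -- With `u = (c + s i)²` and `c² + s² = 1`: `u + 1 = 2c (c + s i)` and `u - 1 = 2s i (c + s i)`.
  rw [circleMap_zero_one_eq_sq, Real.tan_eq_sin_div_cos, Complex.ofReal_neg, Complex.ofReal_div]
  generalize (Real.cos (θ / 2) : ℂ) = c at *
  generalize (Real.sin (θ / 2) : ℂ) = s at *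
  field_simp
  linear_combination (s - c * Complex.I) * hpyth
    + (-2 * s * c ^ 2 - s ^ 2 * c * Complex.I - s ^ 3) * Complex.I_sq

lemma norm_circleMap_add_one_sq_mul_one_add_tan_sq {θ : ℝ} (hθ : Real.cos (θ / 2) ≠ 0) :
    ‖circleMap 0 1 θ + 1‖ ^ 2 * (1 + Real.tan (θ / 2) ^ 2) = 4 := by
  obtain ⟨t, rfl⟩ : ∃ t, θ = 2 * t := ⟨θ / 2, by ring⟩
  rw [mul_div_cancel_left₀ t two_ne_zero] at hθ ⊢
  rw [Complex.sq_norm, Complex.normSq_apply, Complex.add_re, Complex.add_im, circleMap_zero_re,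
    circleMap_zero_im, Complex.one_re, Complex.one_im, Real.tan_eq_sin_div_cos, Real.cos_two_mul,
    Real.sin_two_mul]
  field_simp
  linear_combination (4 * Real.cos t ^ 2 * (Real.sin t ^ 2 + Real.cos t ^ 2 + 1)) *
    Real.sin_sq_add_cos_sq t

noncomputable def cayley (w : ℂ) : ℂ := (Complex.I + w) / (Complex.I - w)

lemma norm_cayley_lt_one {w : ℂ} (hw : w.im < 0) : ‖cayley w‖ < 1 := by
  have hI : w ≠ Complex.I := fun h => by
    rw [h, Complex.I_im] at hw
    linarith
  have hpos : 0 < ‖Complex.I - w‖ := norm_pos_iff.2 (sub_ne_zero.2 hI.symm)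
  rw [cayley, norm_div, div_lt_one hpos]
  refine lt_of_pow_lt_pow_left₀ 2 (norm_nonneg _) ?_
  simp only [Complex.sq_norm, Complex.normSq_apply, Complex.add_re, Complex.add_im,
    Complex.sub_re, Complex.sub_im, Complex.I_re, Complex.I_im]
  nlinarith

theorem norm_neg_tan_half_sub_sq_div_one_add_tan_sq {θ : ℝ} (hθ : Real.cos (θ / 2) ≠ 0)
    {w : ℂ} (hw : w ≠ Complex.I) :
    ‖((-Real.tan (θ / 2) : ℝ) : ℂ) - w‖ ^ 2 / (1 + Real.tan (θ / 2) ^ 2)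
      = ‖Complex.I - w‖ ^ 2 / 4 * ‖circleMap 0 1 θ - cayley w‖ ^ 2 := by
  have h := norm_circleMap_add_one_sq_mul_one_add_tan_sq hθ
  have hne : ‖circleMap 0 1 θ + 1‖ ≠ 0 := by
    rintro h0
    norm_num [h0] at h
  have hcayley : (Complex.I - w) * (circleMap 0 1 θ - cayley w)
      = (Complex.I - w) * circleMap 0 1 θ - (Complex.I + w) := by
    rw [cayley, mul_sub, mul_div_cancel₀ _ (sub_ne_zero.2 hw.symm)]
  rw [div_mul_eq_mul_div, ← mul_pow, ← norm_mul, hcayley,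
    ← neg_tan_half_sub_mul_circleMap_add_one hθ, norm_mul, mul_pow, ← h]
  field_simp

theorem integral_cauchy_zero_one_mul (g : ℝ → ℝ) :
    ∫ y, cauchy 0 1 y * g y = (2 * π)⁻¹ * ∫ θ in Ioo (-π) π, g (-Real.tan (θ / 2)) := by
  rw [← range_neg_two_mul_arctan, ← image_univ,
    integral_image_eq_integral_abs_deriv_smul MeasurableSet.univ
      (fun y _ => ((Real.hasDerivAt_arctan y).const_mul (-2)).hasDerivWithinAt)
      (fun y _ z _ h => Real.arctan_injective (by simpa using h)),
    setIntegral_univ, ← integral_const_mul]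
  congr 1 with y
  have hhalf : -2 * Real.arctan y / 2 = -Real.arctan y := by ring
  rw [hhalf, Real.tan_neg, neg_neg, Real.tan_arctan, smul_eq_mul, abs_mul, abs_neg, abs_two,
    abs_of_pos (by positivity : 0 < 1 / (1 + y ^ 2))]
  simp only [cauchy]
  field_simp
  ring

lemma cauchy_div_cauchy (η : ℝ) {σ : ℝ} (hσ : σ ≠ 0) (y : ℝ) :
    cauchy 0 1 y / cauchy η σ y = ((y - η) ^ 2 + σ ^ 2) / (σ * (1 + y ^ 2)) := by
  simp only [cauchy]
  field_simp
  ring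

lemma log_cauchy_div_cauchy_neg_tan_half (η : ℝ) {σ θ : ℝ} (hσ : 0 < σ)
    (hθ : θ ∈ Ioo (-π) π) :
    Real.log (cauchy 0 1 (-Real.tan (θ / 2)) / cauchy η σ (-Real.tan (θ / 2)))
      = Real.log (((1 + σ) ^ 2 + η ^ 2) / (4 * σ))
        + 2 * Real.log ‖circleMap 0 1 θ - cayley (η - σ * Complex.I)‖ := by
  set w : ℂ := η - σ * Complex.I
  have hw : w.im < 0 := by simp [w, hσ]
  have hwI : w ≠ Complex.I := fun h => by
    rw [h, Complex.I_im] at hw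
    linarith
  have hcos : Real.cos (θ / 2) ≠ 0 :=
    (Real.cos_pos_of_mem_Ioo ⟨by linarith [hθ.1], by linarith [hθ.2]⟩).ne'
  have hu : circleMap 0 1 θ - cayley w ≠ 0 := by
    refine sub_ne_zero.2 fun h => (norm_cayley_lt_one hw).ne ?_
    rw [← h, norm_circleMap_zero, abs_one]
  have hnorm_sub (y : ℝ) : ‖(y : ℂ) - w‖ ^ 2 = (y - η) ^ 2 + σ ^ 2 := by
    rw [show (y : ℂ) - w = ↑(y - η) + σ * Complex.I by push_cast; ring, Complex.sq_norm,
      Complex.normSq_add_mul_I]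
  have hnorm_I : ‖Complex.I - w‖ ^ 2 = (1 + σ) ^ 2 + η ^ 2 := by
    rw [show Complex.I - w = ↑(-η) + ↑(1 + σ) * Complex.I by push_cast; ring, Complex.sq_norm,
      Complex.normSq_add_mul_I, neg_sq, add_comm]
  have hratio : cauchy 0 1 (-Real.tan (θ / 2)) / cauchy η σ (-Real.tan (θ / 2))
      = ((1 + σ) ^ 2 + η ^ 2) / (4 * σ) * ‖circleMap 0 1 θ - cayley w‖ ^ 2 := by
    rw [cauchy_div_cauchy η hσ.ne', ← hnorm_sub, ← hnorm_I, mul_comm σ, ← div_div, neg_sq,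
      norm_neg_tan_half_sub_sq_div_one_add_tan_sq hcos hwI]
    ring
  rw [hratio, Real.log_mul (by positivity) (by positivity), Real.log_pow, Nat.cast_ofNat]

theorem klDiv_cauchy_zero_one (η : ℝ) {σ : ℝ} (hσ : 0 < σ) :
    klDiv (cauchy 0 1) (cauchy η σ) = Real.log (((1 + σ) ^ 2 + η ^ 2) / (4 * σ)) := by
  set c := cayley (η - σ * Complex.I)
  have hc : ‖c‖ < 1 := norm_cayley_lt_one (by simp [hσ])
  calc klDiv (cauchy 0 1) (cauchy η σ)
      = (2 * π)⁻¹ * ∫ θ in Ioo (-π) π, (Real.log (((1 + σ) ^ 2 + η ^ 2) / (4 * σ))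
          + 2 * Real.log ‖circleMap 0 1 θ - c‖) := by
        rw [klDiv, integral_cauchy_zero_one_mul]
        congr 1
        exact setIntegral_congr_fun measurableSet_Ioo
          fun θ hθ => log_cauchy_div_cauchy_neg_tan_half η hσ hθ
    _ = Real.circleAverage (fun u => Real.log (((1 + σ) ^ 2 + η ^ 2) / (4 * σ))
          + 2 * Real.log ‖u - c‖) 0 1 := by
        rw [Real.circleAverage_eq_setIntegral_Ioo, smul_eq_mul]
    _ = Real.log (((1 + σ) ^ 2 + η ^ 2) / (4 * σ)) := by
        simp_rw [← smul_eq_mul (a := (2 : ℝ))]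
        rw [Real.circleAverage_fun_add (circleIntegrable_const _ _ _)
          ((circleIntegrable_log_norm_sub_const 1).const_fun_smul (a := (2 : ℝ))),
          Real.circleAverage_const, Real.circleAverage_fun_smul,
          circleAverage_log_norm_sub_const₀ hc, smul_zero, add_zero]

lemma log_sq_add_sq_div_four_mul_isBigO :
    (fun θ : ℝ × ℝ => Real.log (((1 + θ.2) ^ 2 + θ.1 ^ 2) / (4 * θ.2)))
      =O[𝓝 ((0 : ℝ), (1 : ℝ))] (fun θ : ℝ × ℝ => θ.1 ^ 2 + (θ.2 - 1) ^ 2) := by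
  refine IsBigO.of_bound 1 ?_
  filter_upwards [continuousAt_const.eventually_lt continuousAt_snd
    (show (1 : ℝ) / 4 < 1 by norm_num)] with ⟨η, σ⟩ (hσ : 1 / 4 < σ)
  have hsplit : ((1 + σ) ^ 2 + η ^ 2) / (4 * σ) = 1 + (η ^ 2 + (σ - 1) ^ 2) / (4 * σ) := by
    field_simp
    ring
  have hq : 0 ≤ (η ^ 2 + (σ - 1) ^ 2) / (4 * σ) := by positivity
  rw [Real.norm_of_nonneg (Real.log_nonneg (by rw [hsplit]; linarith)),
    Real.norm_of_nonneg (by positivity), one_mul]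
  calc Real.log (((1 + σ) ^ 2 + η ^ 2) / (4 * σ))
      ≤ ((1 + σ) ^ 2 + η ^ 2) / (4 * σ) - 1 := Real.log_le_sub_one_of_pos (by positivity)
    _ = (η ^ 2 + (σ - 1) ^ 2) / (4 * σ) := by rw [hsplit]; ring
    _ ≤ η ^ 2 + (σ - 1) ^ 2 := div_le_self (by positivity) (by linarith)

/-- the Kullback–Leibler divergence between Cauchy densities has the closed
form `D(f_{0,1}‖f_{η,σ}) = log[((1+σ)² + η²)/(4σ)]`; consequently it is twice
differentiable in `(η,σ)` at `(0,1)` and `O(η² + (σ-1)²)` as `(η,σ) → (0,1)`. -/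
theorem cauchy_kl_closed_form :
    (∀ η σ : ℝ, 0 < σ →
      klDiv (cauchy 0 1) (cauchy η σ) = Real.log (((1 + σ) ^ 2 + η ^ 2) / (4 * σ))) ∧
    ContDiffAt ℝ 2 (fun θ : ℝ × ℝ => klDiv (cauchy 0 1) (cauchy θ.1 θ.2))
      ((0 : ℝ), (1 : ℝ)) ∧
    (fun θ : ℝ × ℝ => klDiv (cauchy 0 1) (cauchy θ.1 θ.2))
      =O[𝓝 ((0 : ℝ), (1 : ℝ))] (fun θ : ℝ × ℝ => θ.1 ^ 2 + (θ.2 - 1) ^ 2) := by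
  have hev : (fun θ : ℝ × ℝ => klDiv (cauchy 0 1) (cauchy θ.1 θ.2))
      =ᶠ[𝓝 ((0 : ℝ), (1 : ℝ))] fun θ => Real.log (((1 + θ.2) ^ 2 + θ.1 ^ 2) / (4 * θ.2)) := by
    filter_upwards [continuousAt_const.eventually_lt continuousAt_snd
      (show (0 : ℝ) < 1 by norm_num)] with θ hθ
    exact klDiv_cauchy_zero_one θ.1 hθ
  refine ⟨fun η σ hσ => klDiv_cauchy_zero_one η hσ, ?_,
    log_sq_add_sq_div_four_mul_isBigO.congr' hev.symm .rfl⟩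
  refine ContDiffAt.congr_of_eventuallyEq ?_ hev
  exact (ContDiffAt.div (by fun_prop) (by fun_prop) (by norm_num)).log (by norm_num)
end
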